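/- arXiv:1104.5605 — 7 statements merged into one kernel-verified Lean document; each statement's English description precedes it below -/
import Mathlib

section
/- Every mechanical word with irrational rotation number is Sturmian: if α ∈ (0,1) is irrational, x₀ ∈ [0,1), and w_n = a if {x₀ + nα} ∈ [0, α) and w_n = b otherwise, then for every n ≥ 1 the word w has exactly n+1 distinct factors of length n. -/
/-- `u` is a factor (finite contiguous subword) of the infinite word `W`. -/
def FactorOf {A : Type*} (u : List A) (W : ℕ → A) : Prop :=
  ∃ i : ℕ, u = (List.range u.length).map fun j => W (i + j)

/-!
Letter `j` of the factor read from the point `z = {x₀ + iα}` is `a` iff `z` lies in the arc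
`[{-jα}, {(1 - j)α})` of the circle. The `n + 1` endpoints `{(1 - k)α}`, `k ≤ n`, of the first `n`
arcs are distinct because `α` is irrational, and they cut `[0, 1)` into `n + 1` intervals. The
factor depends only on the interval containing `z`. Two different intervals give different factors:
of the cut points lying between them take the one of smallest index `k`. If `k ≥ 1` it is the left
endpoint of arc `k - 1`, whose right endpoint does not lie between them; if `k = 0` it is the right
endpoint `α` of arc `0`, whose left endpoint is `0`. Either way that arc separates them. Finally,
the orbit of `x₀` is dense, so it visits every interval.
-/

open Set Filter Topology

section FloorRing

variable {R : Type*} [CommRing R] [LinearOrder R] [IsStrictOrderedRing R] [FloorRing R]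

namespace Int

theorem fract_sub_of_mem_Ico {x y : R} (hx : x ∈ Ico (0 : R) 1) (hy : y ∈ Ico (0 : R) 1) :
    fract (x - y) = if y ≤ x then x - y else x - y + 1 := by
  split_ifs with h
  · exact fract_eq_self.2 ⟨by linarith, by linarith [hx.2, hy.1]⟩
  · exact fract_eq_iff.2 ⟨by linarith [hx.1, hy.2], by linarith, -1, by push_cast; ring⟩

theorem fract_fract_add (a b : R) : fract (fract a + b) = fract (a + b) :=
  fract_eq_fract.2 ⟨-⌊a⌋, by rw [← self_sub_floor]; push_cast; ring⟩

end Int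

variable {a b z z' : R}

theorem fract_sub_lt_fract_sub_iff (ha : a ∈ Ico (0 : R) 1) (hb : b ∈ Ico (0 : R) 1)
    (hz : z ∈ Ico (0 : R) 1) :
    Int.fract (z - a) < Int.fract (b - a) ↔ if a ≤ b then a ≤ z ∧ z < b else a ≤ z ∨ z < b := by
  rw [Int.fract_sub_of_mem_Ico hz ha, Int.fract_sub_of_mem_Ico hb ha]
  split_ifs <;> grind

theorem fract_sub_lt_fract_sub_iff_of_forall_le_iff (ha : a ∈ Ico (0 : R) 1)
    (hb : b ∈ Ico (0 : R) 1) (hz : z ∈ Ico (0 : R) 1) (hz' : z' ∈ Ico (0 : R) 1)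
    (haz : a ≤ z ↔ a ≤ z') (hbz : b ≤ z ↔ b ≤ z') :
    Int.fract (z - a) < Int.fract (b - a) ↔ Int.fract (z' - a) < Int.fract (b - a) := by
  simp only [fract_sub_lt_fract_sub_iff ha hb hz, fract_sub_lt_fract_sub_iff ha hb hz', ← not_le,
    haz, hbz]

theorem not_fract_sub_lt_fract_sub_iff_of_xor (ha : a ∈ Ico (0 : R) 1) (hb : b ∈ Ico (0 : R) 1)
    (hz : z ∈ Ico (0 : R) 1) (hz' : z' ∈ Ico (0 : R) 1) (hxor : Xor (a ∈ Ioc z z') (b ∈ Ioc z z')) :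
    ¬ (Int.fract (z - a) < Int.fract (b - a) ↔ Int.fract (z' - a) < Int.fract (b - a)) := by
  rw [fract_sub_lt_fract_sub_iff ha hb hz, fract_sub_lt_fract_sub_iff ha hb hz']
  simp only [Xor, mem_Ioc] at hxor
  split_ifs <;> grind

end FloorRing

theorem exists_fract_add_mul_mem_Ioo {α : ℝ} (hα : Irrational α) (x₀ : ℝ) {a b : ℝ}
    (ha : 0 ≤ a) (hab : a < b) (hb : b ≤ 1) : ∃ i : ℕ, Int.fract (x₀ + i * α) ∈ Ioo a b := by
  have hdense : DenseRange (fun i : ℕ ↦ i • (α : AddCircle (1 : ℝ))) :=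
    denseRange_zsmul_iff_nsmul.1 (AddCircle.denseRange_zsmul_coe_iff.2 (by simpa using hα))
  have hopen : IsOpen ((x₀ : AddCircle (1 : ℝ)) + · ∈ ((↑) : ℝ → AddCircle (1 : ℝ)) '' Ioo a b) :=
    (QuotientAddGroup.isOpenMap_coe _ isOpen_Ioo).preimage (continuous_const_add _)
  obtain ⟨i, s, hs, hsi⟩ := hdense.exists_mem_open hopen
    ⟨((a + b) / 2 - x₀ : ℝ), (a + b) / 2, ⟨by linarith, by linarith⟩, by simp⟩
  refine ⟨i, ?_⟩
  have hs01 : s ∈ Ico 0 (0 + 1) := by simpa using ⟨ha.trans hs.1.le, hs.2.trans_le hb⟩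
  rw [← AddCircle.coe_nsmul, ← AddCircle.coe_add, nsmul_eq_mul, ← AddCircle.coe_fract (x₀ + i * α),
    AddCircle.coe_eq_coe_iff_of_mem_Ico hs01 (by simp [Int.fract_nonneg, Int.fract_lt_one])] at hsi
  exact hsi ▸ hs

namespace RotationCoding

variable {α : ℝ}

/-- Letter `j` of the coding of `z` is `true` iff `z` lies in the arc `[cut α (j + 1), cut α j)`. -/
noncomputable def cut (α : ℝ) (k : ℕ) : ℝ := Int.fract ((1 - k) * α)

noncomputable def cuts (α : ℝ) (n : ℕ) : Finset ℝ := (Finset.range (n + 1)).image (cut α)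

noncomputable def word (α : ℝ) (n : ℕ) (z : ℝ) : List Bool :=
  (List.range n).map fun j : ℕ ↦ decide (Int.fract (z + j * α) < α)

theorem cut_mem_Ico (α : ℝ) (k : ℕ) : cut α k ∈ Ico (0 : ℝ) 1 :=
  ⟨Int.fract_nonneg _, Int.fract_lt_one _⟩

theorem cut_one (α : ℝ) : cut α 1 = 0 := by
  simp [cut]

theorem cut_injective (hα : Irrational α) : Function.Injective (cut α) := by
  intro j k hjk
  obtain ⟨m, hm⟩ := Int.fract_eq_fract.1 hjk
  by_contra hne
  have hkj : ((k : ℤ) - j) ≠ 0 := sub_ne_zero.2 (by exact_mod_cast Ne.symm hne)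
  exact (hα.intCast_mul hkj).ne_int m (by push_cast; linear_combination hm)

theorem fract_add_mul_lt_iff (h0 : 0 ≤ α) (h1 : α < 1) (z : ℝ) (j : ℕ) :
    Int.fract (z + j * α) < α ↔
      Int.fract (z - cut α (j + 1)) < Int.fract (cut α j - cut α (j + 1)) := by
  have hz : Int.fract (z + j * α) = Int.fract (z - cut α (j + 1)) :=
    Int.fract_eq_fract.2 ⟨-⌊(1 - ((j + 1 : ℕ) : ℝ)) * α⌋, by
      rw [cut, ← Int.self_sub_floor]; push_cast; ring⟩
  have hα : Int.fract (cut α j - cut α (j + 1)) = Int.fract α :=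
    Int.fract_eq_fract.2 ⟨⌊(1 - ((j + 1 : ℕ) : ℝ)) * α⌋ - ⌊(1 - (j : ℝ)) * α⌋, by
      rw [cut, cut, ← Int.self_sub_floor, ← Int.self_sub_floor]; push_cast; ring⟩
  rw [hz, hα, Int.fract_eq_self.2 ⟨h0, h1⟩]

@[simp]
theorem length_word {n : ℕ} {z : ℝ} : (word α n z).length = n := by
  simp [word]

theorem word_eq_word_iff {n : ℕ} {z z' : ℝ} :
    word α n z = word α n z' ↔
      ∀ j < n, (Int.fract (z + j * α) < α ↔ Int.fract (z' + j * α) < α) := by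
  rw [word, word, List.map_inj_left]
  simp only [List.mem_range, decide_eq_decide]

theorem mem_cuts_Ico {n : ℕ} {p : ℝ} (hp : p ∈ cuts α n) : p ∈ Ico (0 : ℝ) 1 := by
  obtain ⟨k, -, rfl⟩ := Finset.mem_image.1 hp
  exact cut_mem_Ico α k

theorem cut_mem_cuts {n k : ℕ} (hk : k ≤ n) : cut α k ∈ cuts α n :=
  Finset.mem_image_of_mem _ (Finset.mem_range.2 (Nat.lt_succ_of_le hk))

theorem card_cuts (hα : Irrational α) (n : ℕ) : (cuts α n).card = n + 1 := by
  rw [cuts, Finset.card_image_of_injective _ (cut_injective hα), Finset.card_range]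

theorem word_eq_of_forall_le_iff (h0 : 0 ≤ α) (h1 : α < 1) {n : ℕ} {z z' : ℝ}
    (hz : z ∈ Ico (0 : ℝ) 1) (hz' : z' ∈ Ico (0 : ℝ) 1) (h : ∀ p ∈ cuts α n, p ≤ z ↔ p ≤ z') :
    word α n z = word α n z' := by
  refine word_eq_word_iff.2 fun j hj ↦ ?_
  simp only [fract_add_mul_lt_iff h0 h1]
  exact fract_sub_lt_fract_sub_iff_of_forall_le_iff (cut_mem_Ico α _) (cut_mem_Ico α _) hz hz'
    (h _ (cut_mem_cuts hj)) (h _ (cut_mem_cuts hj.le))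

theorem word_ne_of_mem_Ioc (h0 : 0 ≤ α) (h1 : α < 1) {n : ℕ} (hn : 1 ≤ n) {z z' p : ℝ}
    (hz : z ∈ Ico (0 : ℝ) 1) (hz' : z' ∈ Ico (0 : ℝ) 1) (hp : p ∈ cuts α n) (hpz : p ∈ Ioc z z') :
    word α n z ≠ word α n z' := by
  have letter_ne {j : ℕ} (hj : j < n) (hxor : Xor (cut α (j + 1) ∈ Ioc z z') (cut α j ∈ Ioc z z')) :
      word α n z ≠ word α n z' := fun h ↦ by
    have := word_eq_word_iff.1 h j hj
    simp only [fract_add_mul_lt_iff h0 h1] at this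
    exact not_fract_sub_lt_fract_sub_iff_of_xor (cut_mem_Ico α _) (cut_mem_Ico α _) hz hz' hxor this
  suffices ∀ k ≤ n, cut α k ∈ Ioc z z' → word α n z ≠ word α n z' by
    obtain ⟨k, hk, rfl⟩ := Finset.mem_image.1 hp
    exact this k (Nat.lt_succ_iff.1 (Finset.mem_range.1 hk)) hpz
  intro k hk hkz
  induction k with
  | zero =>
    refine letter_ne hn (Or.inr ⟨hkz, ?_⟩)
    rw [cut_one]
    exact fun h ↦ h.1.not_ge hz.1
  | succ k ih =>
    by_cases hkz' : cut α k ∈ Ioc z z'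
    · exact ih (by omega) hkz'
    · exact letter_ne hk (Or.inl ⟨hkz, hkz'⟩)

theorem injOn_word_cuts (h0 : 0 ≤ α) (h1 : α < 1) {n : ℕ} (hn : 1 ≤ n) :
    InjOn (word α n) (cuts α n) := by
  intro p hp q hq hpq
  by_contra hne
  rcases lt_or_gt_of_ne hne with hlt | hlt
  · exact word_ne_of_mem_Ioc h0 h1 hn (mem_cuts_Ico hp) (mem_cuts_Ico hq) hq ⟨hlt, le_rfl⟩ hpq
  · exact word_ne_of_mem_Ioc h0 h1 hn (mem_cuts_Ico hq) (mem_cuts_Ico hp) hp ⟨hlt, le_rfl⟩ hpq.symm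

theorem range_word_fract_eq_image_cuts (hα : Irrational α) (h0 : 0 ≤ α) (h1 : α < 1) {n : ℕ}
    (hn : 1 ≤ n) (x₀ : ℝ) :
    range (fun i : ℕ ↦ word α n (Int.fract (x₀ + i * α))) = word α n '' cuts α n := by
  apply Subset.antisymm
  · rintro _ ⟨i, rfl⟩
    set z := Int.fract (x₀ + i * α)
    have hz : z ∈ Ico (0 : ℝ) 1 := ⟨Int.fract_nonneg _, Int.fract_lt_one _⟩
    obtain ⟨p, hp, hpmax⟩ := ((cuts α n).filter (· ≤ z)).exists_max_image id
      ⟨0, Finset.mem_filter.2 ⟨cut_one α ▸ cut_mem_cuts hn, hz.1⟩⟩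
    obtain ⟨hp, hpz⟩ := Finset.mem_filter.1 hp
    refine ⟨p, hp, word_eq_of_forall_le_iff h0 h1 (mem_cuts_Ico hp) hz fun q hq ↦ ?_⟩
    exact ⟨fun hqp ↦ hqp.trans hpz, fun hqz ↦ hpmax q (Finset.mem_filter.2 ⟨hq, hqz⟩)⟩
  · rintro _ ⟨p, hp, rfl⟩
    have hp01 := mem_cuts_Ico hp
    have hcell : ∀ᶠ z in 𝓝[≥] p, ∀ q ∈ cuts α n, q ≤ p ↔ q ≤ z := by
      refine (eventually_all_finset _).2 fun q _ ↦ ?_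
      rcases le_or_gt q p with hqp | hpq
      · filter_upwards [self_mem_nhdsWithin] with z hz using iff_of_true hqp (hqp.trans hz)
      · filter_upwards [nhdsWithin_le_nhds (Iio_mem_nhds hpq)] with z hz
          using iff_of_false hpq.not_ge hz.not_ge
    obtain ⟨u, hu, hpu⟩ := (mem_nhdsGE_iff_exists_mem_Ioc_Ico_subset hp01.2).1 hcell
    obtain ⟨i, hi⟩ := exists_fract_add_mul_mem_Ioo hα x₀ hp01.1 hu.1 hu.2
    exact ⟨i, (word_eq_of_forall_le_iff h0 h1 hp01 ⟨Int.fract_nonneg _, Int.fract_lt_one _⟩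
      (hpu (Ioo_subset_Ico_self hi))).symm⟩

end RotationCoding

theorem setOf_factorOf_eq_range {α x₀ : ℝ} {w : ℕ → Bool}
    (hw : ∀ n : ℕ, w n = decide (Int.fract (x₀ + n * α) < α)) (n : ℕ) :
    {u : List Bool | u.length = n ∧ FactorOf u w} =
      range fun i : ℕ ↦ RotationCoding.word α n (Int.fract (x₀ + i * α)) := by
  have hfactor (i : ℕ) :
      (List.range n).map (fun j ↦ w (i + j)) = RotationCoding.word α n (Int.fract (x₀ + i * α)) :=
    List.map_congr_left fun j _ ↦ by
      rw [hw, Int.fract_fract_add, Nat.cast_add, add_mul, add_assoc]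
  ext u
  constructor
  · rintro ⟨rfl, i, hu⟩
    exact ⟨i, (hfactor i).symm.trans hu.symm⟩
  · rintro ⟨i, rfl⟩
    exact ⟨RotationCoding.length_word, i, by rw [RotationCoding.length_word, hfactor]⟩

theorem stmt1_general (α x₀ : ℝ) (hα : Irrational α) (h0 : 0 < α) (h1 : α < 1)
    (w : ℕ → Bool) (hw : ∀ n : ℕ, w n = decide (Int.fract (x₀ + n * α) < α)) :
    ∀ n : ℕ, 1 ≤ n →
      {u : List Bool | u.length = n ∧ FactorOf u w}.ncard = n + 1 := by
  intro n hn
  rw [setOf_factorOf_eq_range hw, RotationCoding.range_word_fract_eq_image_cuts hα h0.le h1 hn,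
    (RotationCoding.injOn_word_cuts h0.le h1 hn).ncard_image, ncard_coe_finset,
    RotationCoding.card_cuts hα]

/-- Every mechanical word with irrational rotation number is Sturmian. -/
theorem stmt1 (α x₀ : ℝ) (hα : Irrational α) (h0 : 0 < α) (h1 : α < 1)
    (hx : x₀ ∈ Set.Ico (0 : ℝ) 1)
    (w : ℕ → Bool) (hw : ∀ n : ℕ, w n = decide (Int.fract (x₀ + n * α) < α)) :
    ∀ n : ℕ, 1 ≤ n →
      {u : List Bool | u.length = n ∧ FactorOf u w}.ncard = n + 1 :=
  stmt1_general α x₀ hα h0 h1 w hw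
end

section
/- A Sturmian word is not eventually periodic. -/
section EventuallyPeriodic

variable {A : Type*} {W : ℕ → A} {N p : ℕ}

theorem exists_start_lt_add_of_eventually_periodic (hp : 0 < p)
    (hper : ∀ n ≥ N, W (n + p) = W n) (i : ℕ) :
    ∃ i' < N + p, ∀ j, W (i' + j) = W (i + j) := by
  by_cases hi : i < N
  · exact ⟨i, by omega, fun _ => rfl⟩
  have htail : Function.Periodic (fun m => W (N + m)) p := fun m => by
    simpa only [Nat.add_assoc] using hper (N + m) (by omega)
  refine ⟨N + (i - N) % p, by have := Nat.mod_lt (i - N) hp; omega, fun j => ?_⟩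
  have hdiv := Nat.mod_add_div' (i - N) p
  calc W (N + (i - N) % p + j) = W (N + ((i - N) % p + j + (i - N) / p * p)) := by
        simpa only [Nat.cast_id, Nat.add_assoc] using
          (htail.nat_mul ((i - N) / p) ((i - N) % p + j)).symm
    _ = W (i + j) := congrArg W (by omega)

theorem ncard_factors_le_of_eventually_periodic (hp : 0 < p)
    (hper : ∀ n ≥ N, W (n + p) = W n) (n : ℕ) :
    {u : List A | u.length = n ∧ FactorOf u W}.ncard ≤ N + p := by
  have hsub : {u : List A | u.length = n ∧ FactorOf u W} ⊆
      (fun i => (List.range n).map fun j => W (i + j)) '' Set.Iio (N + p) := by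
    rintro u ⟨rfl, i, hu⟩
    obtain ⟨i', hi', hshift⟩ := exists_start_lt_add_of_eventually_periodic hp hper i
    exact ⟨i', hi', by rw [hu, List.length_map, List.length_range]; simp only [hshift]⟩
  calc _ ≤ (_ '' Set.Iio (N + p)).ncard := Set.ncard_le_ncard hsub ((Set.finite_Iio _).image _)
    _ ≤ (Set.Iio (N + p)).ncard := Set.ncard_image_le (Set.finite_Iio _)
    _ = N + p := Set.ncard_Iio_nat _

end EventuallyPeriodic

theorem stmt2_general {A : Type*} (W : ℕ → A)
    (hst : ∀ n : ℕ, 1 ≤ n →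
      {u : List A | u.length = n ∧ FactorOf u W}.ncard = n + 1) :
    ¬ ∃ N p : ℕ, 0 < p ∧ ∀ n ≥ N, W (n + p) = W n := by
  rintro ⟨N, p, hp, hper⟩
  have := ncard_factors_le_of_eventually_periodic hp hper (N + p)
  rw [hst (N + p) (by omega)] at this
  omega

/-- A Sturmian word is not eventually periodic. -/
theorem stmt2 {A : Type*} [Fintype A] (W : ℕ → A)
    (hst : ∀ n : ℕ, 1 ≤ n →
      {u : List A | u.length = n ∧ FactorOf u W}.ncard = n + 1) :
    ¬ ∃ N p : ℕ, 0 < p ∧ ∀ n ≥ N, W (n + p) = W n :=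
  stmt2_general W hst
end

section
/- If the complexity function of an infinite word W satisfies T_W(n+1) = T_W(n) for some n, then W is eventually periodic, and consequently T_W is eventually constant. -/
namespace InfWord

open Set

variable {A : Type*}

def factorAt (W : ℕ → A) (i k : ℕ) : List A := (List.range k).map fun j => W (i + j)

def factors (W : ℕ → A) (k : ℕ) : Set (List A) := range fun i => factorAt W i k

@[simp] lemma length_factorAt (W : ℕ → A) (i k : ℕ) : (factorAt W i k).length = k := by
  simp [factorAt]

lemma factorAt_eq_factorAt_iff {W : ℕ → A} {i j k : ℕ} :
    factorAt W i k = factorAt W j k ↔ ∀ t < k, W (i + t) = W (j + t) := by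
  simp [factorAt, List.map_inj_left]

lemma setOf_factorOf_eq_factors (W : ℕ → A) (k : ℕ) :
    {u : List A | u.length = k ∧ FactorOf u W} = factors W k := by
  ext u
  constructor
  · rintro ⟨rfl, i, hu⟩
    exact ⟨i, hu.symm⟩
  · rintro ⟨i, rfl⟩
    exact ⟨length_factorAt W i k, i, by simp [factorAt]⟩

lemma factors_finite [Finite A] (W : ℕ → A) (k : ℕ) : (factors W k).Finite :=
  (List.finite_length_eq A k).subset (by rintro _ ⟨i, rfl⟩; simp)

lemma dropLast_factorAt_succ (W : ℕ → A) (i k : ℕ) :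
    (factorAt W i (k + 1)).dropLast = factorAt W i k := by
  simp [factorAt, List.range_succ]

lemma dropLast_image_factors_succ (W : ℕ → A) (k : ℕ) :
    List.dropLast '' factors W (k + 1) = factors W k := by
  simp only [factors, ← range_comp, Function.comp_def, dropLast_factorAt_succ]

lemma monotone_ncard_factors [Finite A] (W : ℕ → A) : Monotone fun k => (factors W k).ncard :=
  monotone_nat_of_le_succ fun k =>
    dropLast_image_factors_succ W k ▸ ncard_image_le (factors_finite W (k + 1))

lemma apply_add_eq_of_factorAt_eq [Finite A] {W : ℕ → A} {n : ℕ}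
    (h : (factors W (n + 1)).ncard = (factors W n).ncard) {i j : ℕ}
    (hij : factorAt W i n = factorAt W j n) : W (i + n) = W (j + n) := by
  have hinj : InjOn List.dropLast (factors W (n + 1)) :=
    injOn_of_ncard_image_eq (by rw [dropLast_image_factors_succ, h]) (factors_finite W _)
  have hsucc : factorAt W i (n + 1) = factorAt W j (n + 1) :=
    hinj ⟨i, rfl⟩ ⟨j, rfl⟩ (by rw [dropLast_factorAt_succ, dropLast_factorAt_succ, hij])
  exact factorAt_eq_factorAt_iff.1 hsucc n n.lt_succ_self

lemma factorAt_add_eq_of_factorAt_eq {W : ℕ → A} {n : ℕ}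
    (hdet : ∀ i j, factorAt W i n = factorAt W j n → W (i + n) = W (j + n)) {i j : ℕ}
    (hij : factorAt W i n = factorAt W j n) (m : ℕ) :
    factorAt W (i + m) n = factorAt W (j + m) n := by
  induction m with
  | zero => exact hij
  | succ m ih =>
    have hnext := hdet _ _ ih
    rw [factorAt_eq_factorAt_iff] at ih ⊢
    intro t ht
    rcases Nat.lt_or_ge (t + 1) n with hlt | hge
    · simpa only [Nat.add_assoc, Nat.add_comm 1] using ih (t + 1) hlt
    · obtain rfl : t + 1 = n := by omega
      simpa only [Nat.add_assoc, Nat.add_comm 1] using hnext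

lemma exists_periodic_of_factorAt_determines_next [Finite A] {W : ℕ → A} {n : ℕ}
    (hdet : ∀ i j, factorAt W i n = factorAt W j n → W (i + n) = W (j + n)) :
    ∃ N p : ℕ, 0 < p ∧ ∀ k ≥ N, W (k + p) = W k := by
  obtain ⟨i, j, hij, heq⟩ := (factors_finite W n).exists_lt_map_eq_of_forall_mem
    (f := fun i => factorAt W i n) (mem_range_self ·)
  refine ⟨i + n, j - i, Nat.sub_pos_of_lt hij, fun k hk => ?_⟩
  have := hdet _ _ (factorAt_add_eq_of_factorAt_eq hdet heq (k - (i + n)))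
  convert this.symm using 2 <;> omega

lemma ncard_factors_le_of_periodic {W : ℕ → A} {N p : ℕ} (hp : 0 < p)
    (hper : ∀ k ≥ N, W (k + p) = W k) (k : ℕ) : (factors W k).ncard ≤ N + p := by
  have hperiodic : Function.Periodic (fun m => W (N + m)) p := fun m => by
    simpa only [Nat.add_assoc] using hper (N + m) (Nat.le_add_right N m)
  have hsub : factors W k ⊆ (fun i => factorAt W i k) '' ↑(Finset.range (N + p)) := by
    rintro _ ⟨a, rfl⟩
    rcases Nat.lt_or_ge a N with ha | ha
    · exact ⟨a, Finset.mem_coe.2 (Finset.mem_range.2 (by omega)), rfl⟩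
    refine ⟨N + (a - N) % p, by simp [Nat.mod_lt _ hp], factorAt_eq_factorAt_iff.2 fun t _ => ?_⟩
    calc W (N + (a - N) % p + t)
        = W (N + ((a - N) % p + t) % p) := by rw [Nat.add_assoc, ← hperiodic.map_mod_nat]
      _ = W (N + (a - N + t)) := by
          rw [Nat.mod_add_mod]; exact hperiodic.map_mod_nat _
      _ = W (a + t) := by rw [← Nat.add_assoc, Nat.add_sub_cancel' ha]
  calc (factors W k).ncard
      ≤ ((fun i => factorAt W i k) '' ↑(Finset.range (N + p))).ncard :=
        ncard_le_ncard hsub ((Finset.finite_toSet _).image _)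
    _ ≤ N + p := (ncard_image_le (Finset.finite_toSet _)).trans (by simp)

lemma eventually_const_of_monotone_of_le {f : ℕ → ℕ} (hf : Monotone f) {B : ℕ}
    (hB : ∀ k, f k ≤ B) : ∃ C N : ℕ, ∀ k ≥ N, f k = C := by
  have hlim := tendsto_atTop_ciSup hf ⟨B, by rintro _ ⟨k, rfl⟩; exact hB k⟩
  rw [nhds_discrete, Filter.tendsto_pure] at hlim
  exact ⟨_, Filter.eventually_atTop.1 hlim⟩

end InfWord

open InfWord in
/-- If the complexity does not grow at some `n`, then `W` is eventually periodic
and the complexity function is eventually constant. -/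
theorem stmt3 {A : Type*} [Fintype A] (W : ℕ → A) (n : ℕ)
    (h : {u : List A | u.length = n + 1 ∧ FactorOf u W}.ncard =
      {u : List A | u.length = n ∧ FactorOf u W}.ncard) :
    (∃ N p : ℕ, 0 < p ∧ ∀ k ≥ N, W (k + p) = W k) ∧
      ∃ C N : ℕ, ∀ k ≥ N,
        {u : List A | u.length = k ∧ FactorOf u W}.ncard = C := by
  simp only [setOf_factorOf_eq_factors] at h ⊢
  obtain ⟨N, p, hp, hper⟩ :=
    exists_periodic_of_factorAt_determines_next fun _ _ => apply_add_eq_of_factorAt_eq h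
  exact ⟨⟨N, p, hp, hper⟩, eventually_const_of_monotone_of_le (monotone_ncard_factors W)
    (ncard_factors_le_of_periodic hp hper)⟩
end

section
/- For every infinite word W over a finite alphabet there exists a uniformly recurrent infinite word V all of whose factors are factors of W. -/
/-- `V` is uniformly recurrent: every factor of `V` occurs in every
sufficiently long factor of `V`. -/
def UnifRec {A : Type*} (V : ℕ → A) : Prop :=
  ∀ u : List A, FactorOf u V → ∃ N : ℕ, ∀ v : List A,
    FactorOf v V → v.length = N → u <:+: v

/-!
The closure of the shift orbit of `W` in the compact space `ℕ → A` is closed and shift-invariant,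
and every point of it has only factors of `W`. By Zorn's lemma it contains a minimal nonempty
closed invariant set `K`; take any `V ∈ K`. If some point of `K` avoided a factor `u` of `V`, the
points of `K` avoiding `u` would form a smaller closed invariant set. So `u` occurs in every point
of `K`, by compactness at a position at most some `M`, and applying this to the shifts of `V`
shows that `u` occurs in every factor of `V` of length `M + |u|`.
-/

open Set

theorem IsClosed.exists_minimal_isInvariant {X ι : Type*} [TopologicalSpace X] [CompactSpace X]
    (f : ι → X → X) {S : Set X} (hS : IsClosed S) (hne : S.Nonempty) (hinv : IsInvariant f S) :
    ∃ K ⊆ S, Minimal (fun K : Set X => K.Nonempty ∧ IsClosed K ∧ IsInvariant f K) K := by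
  refine zorn_superset_nonempty _ (fun c hcS hchain hcne => ?_) S ⟨hne, hS, hinv⟩
  have : Nonempty c := hcne.to_subtype
  refine ⟨⋂₀ c, ⟨?_, isClosed_sInter fun s hs => (hcS hs).2.1, ?_⟩,
    fun s hs => sInter_subset_of_mem hs⟩
  · exact IsCompact.nonempty_sInter_of_directed_nonempty_isCompact_isClosed
      (hchain.symm.directedOn (r := fun s t : Set X => s ⊇ t)) (fun s hs => (hcS hs).1)
      (fun s hs => (hcS hs).2.1.isCompact) fun s hs => (hcS hs).2.1
  · exact fun i x hx s hs => (hcS hs).2.2 i (hx s hs)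

namespace InfiniteWord

variable {A : Type*}

def shift (n : ℕ) (x : ℕ → A) : ℕ → A := fun j => x (n + j)

def window (x : ℕ → A) (i n : ℕ) : List A := (List.range n).map fun j => x (i + j)

theorem factorOf_iff {u : List A} {x : ℕ → A} : FactorOf u x ↔ ∃ i, window x i u.length = u :=
  exists_congr fun _ => eq_comm

@[simp] theorem shift_zero (x : ℕ → A) : shift 0 x = x := funext fun j => by simp [shift]

theorem shift_shift (m n : ℕ) (x : ℕ → A) : shift m (shift n x) = shift (n + m) x :=
  funext fun j => by simp [shift, add_assoc]

theorem window_shift (x : ℕ → A) (n i m : ℕ) : window (shift n x) i m = window x (n + i) m := by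
  simp [window, shift, add_assoc]

theorem window_add (x : ℕ → A) (i a b : ℕ) :
    window x i (a + b) = window x i a ++ window x (i + a) b := by
  simp [window, List.range_add, add_assoc]

theorem window_infix_window (x : ℕ → A) {p i m n : ℕ} (h : i + m ≤ n) :
    window x (p + i) m <:+: window x p n := by
  obtain ⟨k, rfl⟩ := Nat.exists_eq_add_of_le h
  rw [window_add, window_add]
  exact List.infix_append _ _ _

theorem factorOf_of_factorOf_shift {u : List A} {x : ℕ → A} {n : ℕ}
    (hu : FactorOf u (shift n x)) : FactorOf u x := by
  obtain ⟨i, hi⟩ := factorOf_iff.mp hu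
  exact factorOf_iff.mpr ⟨n + i, by rw [← window_shift, hi]⟩

variable [TopologicalSpace A]

theorem continuous_shift (n : ℕ) : Continuous (shift n : (ℕ → A) → ℕ → A) :=
  continuous_pi fun _ => continuous_apply _

theorem isInvariant_closure_range_shift (W : ℕ → A) :
    IsInvariant shift (closure (range fun n => shift n W)) := by
  intro m
  refine MapsTo.closure ?_ (continuous_shift m)
  rintro _ ⟨n, rfl⟩
  exact ⟨n + m, (shift_shift m n W).symm⟩

variable [DiscreteTopology A]

theorem isClopen_setOf_window_eq (u : List A) (i n : ℕ) :
    IsClopen {x : ℕ → A | window x i n = u} := by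
  have hwindow : ∀ x : ℕ → A, window x i n = List.ofFn fun j : Fin n => x (i + j) := by
    intro x
    apply List.ext_getElem <;> simp [window]
  simp only [hwindow]
  exact (isClopen_discrete {g : Fin n → A | List.ofFn g = u}).preimage
    (continuous_pi fun _ => continuous_apply _)

theorem isOpen_setOf_factorOf (u : List A) : IsOpen {x : ℕ → A | FactorOf u x} := by
  simp only [factorOf_iff, ofPred_exists]
  exact isOpen_iUnion fun i => (isClopen_setOf_window_eq u i u.length).isOpen

theorem factorOf_of_mem_closure_range_shift {u : List A} {V W : ℕ → A}
    (hV : V ∈ closure (range fun n => shift n W)) (hu : FactorOf u V) : FactorOf u W := by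
  obtain ⟨i, hi⟩ := factorOf_iff.mp hu
  obtain ⟨_, hn, ⟨n, rfl⟩⟩ :=
    mem_closure_iff.mp hV _ (isClopen_setOf_window_eq u i u.length).isOpen hi
  exact factorOf_iff.mpr ⟨n + i, by rw [← window_shift]; exact hn⟩

theorem exists_bound_of_forall_factorOf {u : List A} {K : Set (ℕ → A)} (hK : IsCompact K)
    (h : ∀ x ∈ K, FactorOf u x) : ∃ M, ∀ x ∈ K, ∃ i ≤ M, window x i u.length = u := by
  let U : ℕ → Set (ℕ → A) := fun M => ⋃ i ≤ M, {x | window x i u.length = u}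
  have hopen : ∀ M, IsOpen (U M) := fun M =>
    isOpen_biUnion fun i _ => (isClopen_setOf_window_eq u i u.length).isOpen
  have hcover : K ⊆ ⋃ M, U M := fun x hx => by
    obtain ⟨i, hi⟩ := factorOf_iff.mp (h x hx)
    exact mem_iUnion.mpr ⟨i, mem_iUnion₂.mpr ⟨i, le_rfl, hi⟩⟩
  have hmono : Monotone U := fun M N hMN => biUnion_subset_biUnion_left fun i hi => le_trans hi hMN
  obtain ⟨M, hM⟩ := hK.elim_directed_cover U hopen hcover hmono.directed_le
  exact ⟨M, fun x hx => by simpa [U] using hM hx⟩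

theorem forall_factorOf_of_minimal {K : Set (ℕ → A)}
    (hK : Minimal (fun K : Set (ℕ → A) => K.Nonempty ∧ IsClosed K ∧ IsInvariant shift K) K)
    {u : List A} {V : ℕ → A} (hV : V ∈ K) (hu : FactorOf u V) : ∀ x ∈ K, FactorOf u x := by
  by_contra! ⟨x, hxK, hx⟩
  have hF : (K ∩ {x | ¬FactorOf u x}).Nonempty ∧ IsClosed (K ∩ {x | ¬FactorOf u x}) ∧
      IsInvariant shift (K ∩ {x | ¬FactorOf u x}) :=
    ⟨⟨x, hxK, hx⟩, hK.prop.2.1.inter (isOpen_setOf_factorOf u).isClosed_compl,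
      fun n y hy => ⟨hK.prop.2.2 n hy.1, fun h => hy.2 (factorOf_of_factorOf_shift h)⟩⟩
  exact ((hK.eq_of_subset hF inter_subset_left).symm ▸ hV).2 hu

theorem unifRec_of_minimal [Finite A] {K : Set (ℕ → A)}
    (hK : Minimal (fun K : Set (ℕ → A) => K.Nonempty ∧ IsClosed K ∧ IsInvariant shift K) K)
    {V : ℕ → A} (hV : V ∈ K) : UnifRec V := by
  intro u hu
  obtain ⟨M, hM⟩ := exists_bound_of_forall_factorOf hK.prop.2.1.isCompact
    (forall_factorOf_of_minimal hK hV hu)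
  refine ⟨M + u.length, fun v hv hlen => ?_⟩
  obtain ⟨p, hp⟩ := factorOf_iff.mp hv
  obtain ⟨i, hiM, hi⟩ := hM _ (hK.prop.2.2 p hV)
  rw [window_shift] at hi
  rw [← hp, ← hi, hlen]
  exact window_infix_window V (by omega)

end InfiniteWord

open InfiniteWord in
theorem stmt4_general {A : Type*} [Fintype A] (W : ℕ → A) :
    ∃ V : ℕ → A, UnifRec V ∧ ∀ u : List A, FactorOf u V → FactorOf u W := by
  let _ : TopologicalSpace A := ⊥
  have _ : DiscreteTopology A := ⟨rfl⟩
  have hW : W ∈ closure (range fun n => shift n W) := subset_closure ⟨0, shift_zero W⟩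
  obtain ⟨K, hKW, hK⟩ := isClosed_closure.exists_minimal_isInvariant shift ⟨W, hW⟩
    (isInvariant_closure_range_shift W)
  obtain ⟨V, hV⟩ := hK.prop.1
  exact ⟨V, unifRec_of_minimal hK hV, fun u => factorOf_of_mem_closure_range_shift (hKW hV)⟩

/-- Every infinite word has a uniformly recurrent word all of whose factors
are factors of it. -/
theorem stmt4 {A : Type*} [Fintype A] [Nonempty A] (W : ℕ → A) :
    ∃ V : ℕ → A, UnifRec V ∧ ∀ u : List A, FactorOf u V → FactorOf u W :=
  stmt4_general W
end

section
/- Let α be irrational and consider the rotation T(x) = {x+α} on [0,1) coded by U = [0,1/2). If two infinite binary sequences w and v are both essential evolutions of the same starting point x₀ (i.e., each finite prefix is the common coding of some open set of points arbitrarily close to x₀), then the mismatch density ρ(w,v) = lim_{N→∞}(1/N)#{n<N : w_n ≠ v_n} exists and equals 0. -/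
/-!
Off the frontier of `U`, membership in `U` is locally constant, so at any time `n` at which the
orbit point `f^[n] x₀` avoids the frontier, every essential evolution of `x₀` reads off whether
`f^[n] x₀ ∈ U`. The frontier of `[0, 1/2)` in the circle is contained in `{0, 1/2}`, and an
irrational rotation visits each point at most once, so two essential evolutions differ at no more
than two times.
-/

open Filter

/-- `u` is an essential finite evolution of `x₀` for the system `(f, U)`:
every neighborhood of `x₀` contains a nonempty open set on which every point
has coding prefix `u`. -/
def EssFinEvol {X : Type*} [TopologicalSpace X] (f : X → X) (U : Set X)
    (u : List Bool) (x₀ : X) : Prop :=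
  ∀ O ∈ nhds x₀, ∃ V : Set X, V ⊆ O ∧ IsOpen V ∧ V.Nonempty ∧
    ∀ x ∈ V, ∀ n : Fin u.length, (u.get n = true ↔ f^[(n : ℕ)] x ∈ U)

/-- `w` is an essential (infinite) evolution of `x₀`: every prefix of `w` is an
essential finite evolution of `x₀`. -/
def EssEvol {X : Type*} [TopologicalSpace X] (f : X → X) (U : Set X)
    (w : ℕ → Bool) (x₀ : X) : Prop :=
  ∀ L : ℕ, EssFinEvol f U (List.ofFn fun i : Fin L => w i) x₀

open Set Topology Function

section EssentialEvolution

variable {X : Type*} [TopologicalSpace X] {f : X → X} {U : Set X} {w : ℕ → Bool} {x₀ : X}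

theorem EssEvol.exists_mem_iff_of_mem_nhds_iterate (hw : EssEvol f U w x₀) (hf : Continuous f)
    {n : ℕ} {O : Set X} (hO : O ∈ 𝓝 (f^[n] x₀)) : ∃ x ∈ O, (w n = true ↔ x ∈ U) := by
  obtain ⟨V, hVO, -, ⟨x, hxV⟩, hcode⟩ :=
    hw (n + 1) _ ((hf.iterate n).continuousAt.preimage_mem_nhds hO)
  have hcode_n := hcode x hxV ⟨n, by simp⟩
  rw [List.get_ofFn] at hcode_n
  exact ⟨f^[n] x, hVO hxV, hcode_n⟩

theorem EssEvol.apply_eq_true_iff_of_notMem_frontier (hw : EssEvol f U w x₀) (hf : Continuous f)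
    {n : ℕ} (hn : f^[n] x₀ ∉ frontier U) : w n = true ↔ f^[n] x₀ ∈ U := by
  by_cases hU : f^[n] x₀ ∈ U
  · obtain ⟨x, hx, hcode⟩ := hw.exists_mem_iff_of_mem_nhds_iterate hf
      (mem_interior_iff_mem_nhds.mp ((mem_interior_iff_notMem_frontier hU).mpr hn))
    simpa [hU] using hcode.mpr hx
  · rw [← frontier_compl] at hn
    obtain ⟨x, hx, hcode⟩ := hw.exists_mem_iff_of_mem_nhds_iterate hf
      (mem_interior_iff_mem_nhds.mp ((mem_interior_iff_notMem_frontier (s := Uᶜ) hU).mpr hn))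
    simpa [hU] using mt hcode.mp hx

end EssentialEvolution

namespace AddCircle

variable {p : ℝ} [Fact (0 < p)]

theorem injective_add_nsmul_coe {α : ℝ} (hα : Irrational (α / p)) (x : AddCircle p) :
    Injective fun n : ℕ => x + n • (α : AddCircle p) := by
  refine (add_right_injective x).comp (injective_nsmul_iff_not_isOfFinAddOrder.mpr ?_)
  rw [not_isOfFinAddOrder_iff_forall_rat_ne_div]
  exact fun q hq => hα ⟨q, hq⟩

theorem frontier_coe_image_Ico_subset {c : ℝ} (hcp : c ≤ p) :
    frontier (((↑) : ℝ → AddCircle p) '' Ico 0 c) ⊆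
      {((0 : ℝ) : AddCircle p), (c : AddCircle p)} := by
  have hopen : IsOpenMap ((↑) : ℝ → AddCircle p) := QuotientAddGroup.isOpenMap_coe
  rintro z ⟨hz_closure, hz_interior⟩
  obtain ⟨r, hr, rfl⟩ := eq_coe_Ico z
  rcases lt_trichotomy r c with hrc | rfl | hcr
  · rcases hr.1.eq_or_lt with rfl | hr₀
    · exact Or.inl rfl
    refine absurd (interior_mono (image_mono Ioo_subset_Ico_self) ?_) hz_interior
    rw [(hopen _ isOpen_Ioo).interior_eq]
    exact mem_image_of_mem _ ⟨hr₀, hrc⟩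
  · exact Or.inr rfl
  · obtain ⟨-, ⟨s, hs, rfl⟩, t, ht, hts⟩ := mem_closure_iff.mp hz_closure _
      (hopen _ isOpen_Ioo) (mem_image_of_mem _ ⟨hcr, hr.2⟩)
    have hIco : Ico 0 p ⊆ Ico 0 (0 + p) := by rw [zero_add]
    have := (coe_eq_coe_iff_of_mem_Ico (hIco ⟨ht.1, ht.2.trans_le hcp⟩)
      (hIco ⟨ht.1.trans (ht.2.trans hs.1).le, hs.2⟩)).mp hts
    linarith [ht.2, hs.1]

end AddCircle

theorem tendsto_card_filter_range_div_atTop_of_finite {P : ℕ → Prop} [DecidablePred P]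
    (hP : {n | P n}.Finite) :
    Tendsto (fun N : ℕ => (((Finset.range N).filter P).card : ℝ) / N) atTop (𝓝 0) := by
  refine squeeze_zero (fun N => by positivity) (fun N => ?_)
    (tendsto_const_div_atTop_nhds_zero_nat (hP.toFinset.card : ℝ))
  gcongr
  intro n hn
  simpa using (Finset.mem_filter.mp hn).2

/-- Two essential evolutions of the same point of an irrational rotation coded
by `[0, 1/2)` have mismatch density zero. -/
theorem stmt7 (α : ℝ) (hα : Irrational α)
    (f : UnitAddCircle → UnitAddCircle) (hf : ∀ x, f x = x + (α : UnitAddCircle))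
    (U : Set UnitAddCircle)
    (hU : U = (fun r : ℝ => (r : UnitAddCircle)) '' Set.Ico 0 (1 / 2))
    (x₀ : UnitAddCircle) (w v : ℕ → Bool)
    (hw : EssEvol f U w x₀) (hv : EssEvol f U v x₀) :
    Tendsto
      (fun N : ℕ =>
        (((Finset.range N).filter fun n => w n ≠ v n).card : ℝ) / N)
      atTop (nhds 0) := by
  obtain rfl : f = (· + (α : UnitAddCircle)) := funext hf
  have horbit : Injective fun n : ℕ => (· + (α : UnitAddCircle))^[n] x₀ := by
    simpa using AddCircle.injective_add_nsmul_coe (by simpa using hα) x₀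
  have hfrontier : (frontier U).Finite :=
    (toFinite _).subset (hU ▸ AddCircle.frontier_coe_image_Ico_subset (by norm_num))
  refine tendsto_card_filter_range_div_atTop_of_finite
    ((hfrontier.preimage horbit.injOn).subset fun n hn => ?_)
  by_contra hn_frontier
  exact hn (Bool.eq_iff_iff.mpr <|
    (hw.apply_eq_true_iff_of_notMem_frontier (continuous_add_const _) hn_frontier).trans
      (hv.apply_eq_true_iff_of_notMem_frontier (continuous_add_const _) hn_frontier).symm)
end

section
/- If W is a uniformly recurrent infinite word that is not eventually periodic, then there exist arbitrarily long finite words that are right special factors of W; in particular there exist two distinct uniformly recurrent right-infinite words V₁ ≠ V₂, both with the same factor set as W, which share a common arbitrarily long prefix structure (i.e., for each n there is a factor u of length n with two distinct right extensions). -/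
/-!
Without right special factors of length `n`, the length-`n` window at any position determines
the next letter, so two positions with the same window carry the same suffix. Over a finite
alphabet some window repeats, and the word is eventually periodic.
-/

section Words

variable {A : Type*} (W : ℕ → A)

theorem factorOf_window (i n : ℕ) : FactorOf ((List.range n).map fun k => W (i + k)) W :=
  ⟨i, by simp⟩

theorem factorOf_window_append (i n : ℕ) :
    FactorOf ((List.range n).map (fun k => W (i + k)) ++ [W (i + n)]) W :=
  ⟨i, by simp [List.range_succ]⟩

theorem exists_lt_window_eq [Finite A] (n : ℕ) :
    ∃ i j, i < j ∧ ∀ k < n, W (i + k) = W (j + k) := by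
  obtain ⟨i, j, hne, hij⟩ :=
    Finite.exists_ne_map_eq_of_infinite fun i : ℕ => fun k : Fin n => W (i + k)
  rcases lt_or_gt_of_ne hne with hlt | hlt
  · exact ⟨i, j, hlt, fun k hk => congrFun hij ⟨k, hk⟩⟩
  · exact ⟨j, i, hlt, fun k hk => (congrFun hij ⟨k, hk⟩).symm⟩

variable {W}

theorem exists_rightSpecial_of_window_eq {n i j : ℕ} (hwin : ∀ k < n, W (i + k) = W (j + k))
    (hne : W (i + n) ≠ W (j + n)) :
    ∃ u : List A, FactorOf u W ∧ u.length = n ∧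
      ∃ a b : A, a ≠ b ∧ FactorOf (u ++ [a]) W ∧ FactorOf (u ++ [b]) W := by
  have hsame : ((List.range n).map fun k => W (i + k)) = (List.range n).map fun k => W (j + k) :=
    List.map_congr_left fun k hk => hwin k (List.mem_range.mp hk)
  refine ⟨_, factorOf_window W i n, by simp, _, _, hne, factorOf_window_append W i n, ?_⟩
  rw [hsame]
  exact factorOf_window_append W j n

theorem shift_eq_of_window_eq {n i j : ℕ}
    (hnext : ∀ i j, (∀ k < n, W (i + k) = W (j + k)) → W (i + n) = W (j + n))
    (hwin : ∀ k < n, W (i + k) = W (j + k)) (k : ℕ) : W (i + k) = W (j + k) := by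
  induction k using Nat.strong_induction_on with
  | _ k ih =>
    rcases lt_or_ge k n with hk | hk
    · exact hwin k hk
    · have hstep := hnext (i + (k - n)) (j + (k - n)) fun m hm => by
        simpa only [add_assoc] using ih (k - n + m) (by omega)
      rwa [add_assoc, add_assoc, Nat.sub_add_cancel hk] at hstep

theorem eventually_periodic_of_shift_eq {i j : ℕ} (hij : i < j)
    (hshift : ∀ k, W (i + k) = W (j + k)) :
    ∃ N p : ℕ, 0 < p ∧ ∀ m ≥ N, W (m + p) = W m :=
  ⟨i, j - i, by omega, fun m hm => by
    have h := hshift (m - i)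
    rwa [Nat.add_sub_cancel' hm, show j + (m - i) = m + (j - i) by omega, eq_comm] at h⟩

end Words

theorem stmt10_general {A : Type*} [Fintype A] (W : ℕ → A)
    (hnp : ¬ ∃ N p : ℕ, 0 < p ∧ ∀ n ≥ N, W (n + p) = W n) :
    ∀ n : ℕ, ∃ u : List A, FactorOf u W ∧ n ≤ u.length ∧
      ∃ a b : A, a ≠ b ∧ FactorOf (u ++ [a]) W ∧ FactorOf (u ++ [b]) W := by
  intro n
  by_contra hno
  have hnext : ∀ i j, (∀ k < n, W (i + k) = W (j + k)) → W (i + n) = W (j + n) := by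
    intro i j hwin
    by_contra hne
    obtain ⟨u, hu, hlen, hspecial⟩ := exists_rightSpecial_of_window_eq hwin hne
    exact hno ⟨u, hu, hlen.ge, hspecial⟩
  obtain ⟨i, j, hij, hwin⟩ := exists_lt_window_eq W n
  exact hnp (eventually_periodic_of_shift_eq hij (shift_eq_of_window_eq hnext hwin))

/-- A uniformly recurrent, not eventually periodic word has arbitrarily long
right special factors. -/
theorem stmt10 {A : Type*} [Fintype A] (W : ℕ → A)
    (hur : UnifRec W)
    (hnp : ¬ ∃ N p : ℕ, 0 < p ∧ ∀ n ≥ N, W (n + p) = W n) :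
    ∀ n : ℕ, ∃ u : List A, FactorOf u W ∧ n ≤ u.length ∧
      ∃ a b : A, a ≠ b ∧ FactorOf (u ++ [a]) W ∧ FactorOf (u ++ [b]) W :=
  stmt10_general W hnp
end

section
/- Consider the unipotent torus map f(x₁,...,x_m) = (x₁+ε, x₂+x₁, ..., x_m+x_{m-1}) mod 1 with ε irrational, and the coding set U = {x : 0 ≤ x_m < 1/2}. If U is irreducible, then distinct points of the torus have distinct essential evolutions, and for every δ > 0 there exists N(δ) such that any two points at distance greater than δ have distinct evolutions already within the first N(δ) symbols. -/
/-- `U` is irreducible: its closure is not the preimage of a closed set under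
any nontrivial epimorphism of dynamics. -/
def IrredSet {M : Type} [TopologicalSpace M] (f : M → M) (U : Set M) : Prop :=
  ¬ ∃ (M' : Type) (_ : TopologicalSpace M') (g : M → M') (f' : M' → M'),
      Continuous g ∧ Function.Surjective g ∧ ¬ Function.Injective g ∧
        Continuous f' ∧ g ∘ f = f' ∘ g ∧
        ∃ S : Set M', IsClosed S ∧ g ⁻¹' S = closure U

/-!
Essential evolutions only see `closure U`: wherever an orbit avoids the frontier of `U`, the
evolution symbol at time `n` says whether the `n`-th iterate lies in `closure U`. If two distinct
points `p`, `q` had the same closure-itinerary, identifying `f^[n] p` with `f^[n] q` for all `n`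
would give a nontrivial factor of `(M, f)` in which `closure U` is the preimage of a closed set,
so irreducibility forbids it.

For the unipotent torus map, the last coordinate of `f^[n] x` is `P(n) mod 1` for a real
polynomial `P` with leading coefficient `ε / m!`. The frontier of `U` lies over `{0, 1/2}`, so an
orbit meets it only at the `n` with `P(n)` rational; if there were infinitely many, Lagrange
interpolation would make `P` a rational polynomial and `ε` rational. Past these finitely many
times `K`, distinct points sharing an essential evolution would give distinct points `f^[K] x`,
`f^[K] y` with the same closure-itinerary.

The uniform bound `N(δ)` follows by compactness, since essential evolutions form a closed subset
of `(ℕ → Bool) × M`.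
-/

open Filter Topology Set Function

section Evolutions

variable {X : Type*} (f : X → X) (U : Set X)

def evolSet (w : ℕ → Bool) (L : ℕ) : Set X :=
  {z | ∀ n < L, (w n = true ↔ f^[n] z ∈ U)}

variable {f U}

theorem evolSet_eq_of_forall_lt_eq {w w' : ℕ → Bool} {L : ℕ} (h : ∀ n < L, w' n = w n) :
    evolSet f U w' L = evolSet f U w L := by
  ext z
  exact forall₂_congr fun n hn => by rw [h n hn]

variable [TopologicalSpace X]

theorem essEvol_iff {w : ℕ → Bool} {x : X} :
    EssEvol f U w x ↔ ∀ L, x ∈ closure (interior (evolSet f U w L)) := by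
  refine forall_congr' fun L => ?_
  have hcode : ∀ z, (∀ n : Fin (List.ofFn fun i : Fin L => w i).length,
      ((List.ofFn fun i : Fin L => w i).get n = true ↔ f^[n] z ∈ U)) ↔
        z ∈ evolSet f U w L := by
    intro z
    simp [evolSet, Fin.forall_iff]
  rw [mem_closure_iff_nhds]
  constructor
  · intro h t ht
    obtain ⟨V, hVt, hVo, ⟨z, hz⟩, hV⟩ := h t ht
    exact ⟨z, hVt hz, hVo.subset_interior_iff.2 (fun z hz => (hcode z).1 (hV z hz)) hz⟩
  · intro h O hO
    obtain ⟨z, hz⟩ := h (interior O) (interior_mem_nhds.2 hO)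
    exact ⟨interior O ∩ interior (evolSet f U w L), inter_subset_left.trans interior_subset,
      isOpen_interior.inter isOpen_interior, ⟨z, hz⟩,
      fun z hz => (hcode z).2 (interior_subset hz.2)⟩

theorem isClosed_setOf_mem_of_eventually_eq {A : Type*} [TopologicalSpace A] {T : A → Set X}
    (hT : ∀ a, IsClosed (T a)) (hloc : ∀ a, ∀ᶠ b in 𝓝 a, T b = T a) :
    IsClosed {p : A × X | p.2 ∈ T p.1} := by
  rw [← isOpen_compl_iff, isOpen_iff_mem_nhds]
  rintro ⟨a, x⟩ hx
  filter_upwards [prod_mem_nhds (hloc a) ((hT a).isOpen_compl.mem_nhds hx)]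
  rintro ⟨b, y⟩ ⟨hb, hy⟩ hyb
  exact hy (hb ▸ hyb)

theorem eventually_forall_lt_eq (w : ℕ → Bool) (L : ℕ) :
    ∀ᶠ w' in 𝓝 w, ∀ n < L, w' n = w n :=
  (eventually_all_finite (Set.finite_lt_nat L)).2 fun n _ =>
      (continuous_apply n).continuousAt.eventually_mem ((isOpen_discrete {w n}).mem_nhds rfl)

theorem isClosed_setOf_essEvol : IsClosed {p : (ℕ → Bool) × X | EssEvol f U p.1 p.2} := by
  simp only [essEvol_iff, ofPred_forall]
  exact isClosed_iInter fun L => isClosed_setOf_mem_of_eventually_eq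
    (T := fun w => closure (interior (evolSet f U w L))) (fun _ => isClosed_closure)
    fun w => (eventually_forall_lt_eq w L).mono fun w' hw' => by
      rw [evolSet_eq_of_forall_lt_eq hw']

theorem EssEvol.iterate_mem_closure_iff {w : ℕ → Bool} {x : X} (hx : EssEvol f U w x)
    (hf : Continuous f) {n : ℕ} (hn : f^[n] x ∉ frontier U) :
    f^[n] x ∈ closure U ↔ w n = true := by
  have hxS : x ∈ closure (evolSet f U w (n + 1)) :=
    closure_mono interior_subset (essEvol_iff.1 hx (n + 1))
  have hcode : ∀ z ∈ evolSet f U w (n + 1), (w n = true ↔ f^[n] z ∈ U) :=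
    fun z hz => hz n n.lt_succ_self
  cases hw : w n
  · have hUc : f^[n] x ∈ closure Uᶜ :=
      map_mem_closure (hf.iterate n) hxS fun z hz => by simpa [hw] using hcode z hz
    simp only [Bool.false_eq_true, iff_false]
    exact fun hU => hn (by rw [frontier_eq_closure_inter_closure]; exact ⟨hU, hUc⟩)
  · simpa using map_mem_closure (hf.iterate n) hxS fun z hz => by simpa [hw] using hcode z hz

end Evolutions

section Irreducibility

variable {M : Type} [TopologicalSpace M] {f : M → M} {U : Set M}

theorem not_irredSet_of_iterate_mem_closure_iff (hf : Continuous f) {p q : M} (hpq : p ≠ q)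
    (h : ∀ n, f^[n] p ∈ closure U ↔ f^[n] q ∈ closure U) : ¬IrredSet f U := by
  let r : M → M → Prop := fun a b => ∃ n, a = f^[n] p ∧ b = f^[n] q
  have hr : ∀ a b, r a b → r (f a) (f b) := by
    rintro _ _ ⟨n, rfl, rfl⟩
    exact ⟨n + 1, (iterate_succ_apply' f n p).symm, (iterate_succ_apply' f n q).symm⟩
  have hsat : Quot.mk r ⁻¹' (Quot.mk r '' closure U) = closure U := by
    refine subset_antisymm (fun a ⟨b, hb, hba⟩ => ?_) (subset_preimage_image _ _)
    have hrel : ∀ a b, Relation.EqvGen r a b → (a ∈ closure U ↔ b ∈ closure U) := by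
      intro a b hab
      induction hab with
      | rel a b hab => obtain ⟨n, rfl, rfl⟩ := hab; exact h n
      | refl => exact Iff.rfl
      | symm _ _ _ ih => exact ih.symm
      | trans _ _ _ _ _ ih₁ ih₂ => exact ih₁.trans ih₂
    exact (hrel b a (Quot.eqvGen_exact hba)).1 hb
  refine fun hirr => hirr ⟨Quot r, inferInstance, Quot.mk r, Quot.map f hr, continuous_quot_mk,
    Quot.mk_surjective, fun hinj => hpq (hinj (Quot.sound ⟨0, rfl, rfl⟩)), ?_, rfl,
    Quot.mk r '' closure U, ?_, hsat⟩
  · exact isQuotientMap_quot_mk.continuous_iff.2 (continuous_quot_mk.comp hf)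
  · exact isQuotientMap_quot_mk.isClosed_preimage.1 (by rw [hsat]; exact isClosed_closure)

theorem eq_of_essEvol_of_irredSet (hf : Continuous f) (hinj : Injective f) (hirr : IrredSet f U)
    {w : ℕ → Bool} {x y : M} (hx : EssEvol f U w x) (hy : EssEvol f U w y)
    (hxU : {n | f^[n] x ∈ frontier U}.Finite) (hyU : {n | f^[n] y ∈ frontier U}.Finite) :
    x = y := by
  by_contra hxy
  obtain ⟨K, hK⟩ := (hxU.union hyU).bddAbove
  refine not_irredSet_of_iterate_mem_closure_iff hf ((hinj.iterate (K + 1)).ne hxy)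
    (fun n => ?_) hirr
  have hn : n + (K + 1) ∉ {n | f^[n] x ∈ frontier U} ∪ {n | f^[n] y ∈ frontier U} :=
    fun h => by have := hK h; omega
  simp only [mem_union, mem_ofPred_eq, not_or] at hn
  rw [← iterate_add_apply, ← iterate_add_apply, hx.iterate_mem_closure_iff hf hn.1,
    hy.iterate_mem_closure_iff hf hn.2]

end Irreducibility

theorem exists_separation_length_of_isClosed {X : Type*} [TopologicalSpace X] [CompactSpace X]
    {C : Set ((ℕ → Bool) × X)} (hC : IsClosed C) {K : Set (X × X)} (hK : IsClosed K)
    (hsep : ∀ x y w, (x, y) ∈ K → (w, x) ∈ C → (w, y) ∉ C) :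
    ∃ N, ∀ x y w v, (x, y) ∈ K → (w, x) ∈ C → (v, y) ∈ C →
      ∃ n < N, w n ≠ v n := by
  by_contra! hcon
  let A : ℕ → Set ((X × X) × (ℕ → Bool) × (ℕ → Bool)) := fun N =>
    {q | q.1 ∈ K ∧ (q.2.1, q.1.1) ∈ C ∧ (q.2.2, q.1.2) ∈ C ∧
      ∀ n < N, q.2.1 n = q.2.2 n}
  have hA : ∀ N, IsClosed (A N) := fun N => by
    have hagree : IsClosed
        {q : (X × X) × (ℕ → Bool) × (ℕ → Bool) | ∀ n < N, q.2.1 n = q.2.2 n} := by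
      simp only [ofPred_forall]
      exact isClosed_iInter fun n => isClosed_iInter fun _ =>
        isClosed_eq (by fun_prop) (by fun_prop)
    exact (hK.preimage continuous_fst).inter ((hC.preimage (by fun_prop)).inter
      ((hC.preimage (by fun_prop)).inter hagree))
  obtain ⟨⟨⟨x, y⟩, w, v⟩, hq⟩ :=
    IsCompact.nonempty_iInter_of_sequence_nonempty_isCompact_isClosed A
    (fun N q hq => ⟨hq.1, hq.2.1, hq.2.2.1, fun n hn => hq.2.2.2 n (by omega)⟩)
    (fun N => by
      obtain ⟨x, y, w, v, hxy, hx, hy, hwv⟩ := hcon N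
      exact ⟨((x, y), w, v), hxy, hx, hy, hwv⟩)
    (hA 0).isCompact hA
  simp only [mem_iInter] at hq
  have hwv : w = v := funext fun n => (hq (n + 1)).2.2.2 n n.lt_succ_self
  exact hsep x y w (hq 0).1 (hq 0).2.1 (hwv ▸ (hq 0).2.2.1)

open Polynomial in
theorem Polynomial.exists_map_eq_of_infinite_eval_mem_range {K L : Type*} [Field K] [Field L]
    [Algebra K L] {P : L[X]}
    (h : {x : K | ∃ r : K, P.eval (algebraMap K L x) = algebraMap K L r}.Infinite) :
    ∃ Q : K[X], Q.map (algebraMap K L) = P := by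
  classical
  obtain ⟨s, hs, hcard⟩ := h.exists_subset_card_eq (P.natDegree + 1)
  choose! v hv using fun x (hx : x ∈ s) => hs hx
  have hinj : Set.InjOn (algebraMap K L) s := (algebraMap K L).injective.injOn
  refine ⟨Lagrange.interpolate s id v, (Polynomial.eq_of_degrees_lt_of_eval_index_eq s hinj
    ?_ ?_ fun x hx => ?_).symm⟩
  · rw [hcard]
    exact degree_le_natDegree.trans_lt (by exact_mod_cast P.natDegree.lt_succ_self)
  · exact degree_map_le.trans_lt (Lagrange.degree_interpolate_lt _ injective_id.injOn)
  · rw [hv x hx, eval_map, eval₂_at_apply]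
    exact congrArg _ (Lagrange.eval_interpolate_at_node v injective_id.injOn hx).symm

open Polynomial Nat in
theorem Polynomial.exists_coeff_eq_and_eval_eq_sum_choose {K : Type*} [Field K] [CharZero K]
    (a : ℕ → K) (i : ℕ) :
    ∃ P : K[X], P.coeff i = a i / i ! ∧
      ∀ n : ℕ, P.eval (n : K) = ∑ j ∈ Finset.range (i + 1), (n.choose j : K) * a j := by
  refine ⟨∑ j ∈ Finset.range (i + 1), C (a j / j !) * descPochhammer K j, ?_, fun n => ?_⟩
  · rw [finsetSum_coeff, Finset.sum_eq_single_of_mem i (Finset.self_mem_range_succ i)]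
    · have hlead : (descPochhammer K i).coeff i = 1 := by
        simpa [descPochhammer_natDegree] using (monic_descPochhammer K i).coeff_natDegree
      rw [coeff_C_mul, hlead, mul_one]
    · intro j hj hji
      rw [coeff_C_mul, coeff_eq_zero_of_natDegree_lt, mul_zero]
      rw [descPochhammer_natDegree]
      have := Finset.mem_range.1 hj
      omega
  · rw [eval_finsetSum]
    refine Finset.sum_congr rfl fun j _ => ?_
    rw [eval_mul, eval_C, Nat.cast_choose_eq_descPochhammer_div]
    ring

section AddPrev

variable {A : Type*} [AddCommMonoid A]

def addPrev (y : ℕ → A) : ℕ → A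
  | 0 => y 0
  | i + 1 => y (i + 1) + y i

theorem iterate_addPrev_apply_zero (y : ℕ → A) (n : ℕ) : addPrev^[n] y 0 = y 0 := by
  induction n with
  | zero => rfl
  | succ n ih => rw [iterate_succ_apply', addPrev, ih]

theorem iterate_addPrev_apply (y : ℕ → A) (n i : ℕ) :
    addPrev^[n] y i = ∑ j ∈ Finset.range (i + 1), n.choose j • y (i - j) := by
  induction n generalizing i with
  | zero => simp [Finset.sum_range_succ', Nat.choose_zero_succ]
  | succ n ih =>
    rw [iterate_succ_apply']
    cases i with
    | zero => simp [addPrev, ih]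
    | succ i =>
      rw [addPrev, ih, ih, Finset.sum_range_succ' _ (i + 1), Finset.sum_range_succ' _ (i + 1)]
      simp only [Nat.choose_succ_succ, add_smul, Finset.sum_add_distrib, Nat.choose_zero_right,
        Nat.sub_zero, Nat.add_sub_add_right]
      abel

end AddPrev

section UnipotentMap

variable {G : Type*} {m : ℕ}

def unipotentMap [Add G] (c : G) (x : Fin m → G) (i : Fin m) : G :=
  if i.val = 0 then x i + c else x i + x ⟨i.val - 1, lt_of_le_of_lt (Nat.sub_le _ _) i.isLt⟩

theorem continuous_unipotentMap [TopologicalSpace G] [Add G] [ContinuousAdd G] (c : G) :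
    Continuous (unipotentMap (m := m) c) :=
  continuous_pi fun i => by unfold unipotentMap; split_ifs <;> fun_prop

theorem unipotentMap_injective [AddGroup G] (c : G) : Injective (unipotentMap (m := m) c) := by
  intro a b hab
  funext ⟨i, hi⟩
  induction i with
  | zero => simpa [unipotentMap] using congrFun hab ⟨0, hi⟩
  | succ i ih =>
    have h := congrFun hab ⟨i + 1, hi⟩
    simp only [unipotentMap, Nat.add_one_ne_zero, if_false, Nat.add_sub_cancel] at h
    rw [ih (by omega)] at h
    exact add_right_cancel h

theorem iterate_unipotentMap_apply [AddCommMonoid G] (y : ℕ → G) (n : ℕ) (i : Fin m) :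
    (unipotentMap (y 0))^[n] (fun k => y (k + 1)) i = addPrev^[n] y (i + 1) := by
  induction n generalizing i with
  | zero => rfl
  | succ n ih =>
    rw [iterate_succ_apply', iterate_succ_apply', unipotentMap]
    obtain ⟨_ | k, hk⟩ := i
    · simp [ih, addPrev, iterate_addPrev_apply_zero]
    · simp [ih, addPrev]

end UnipotentMap

def halfArc : Set UnitAddCircle := ((↑) : ℝ → UnitAddCircle) '' Ico 0 (1 / 2)

theorem frontier_halfArc_subset :
    frontier halfArc ⊆ {((0 : ℝ) : UnitAddCircle), ((1 / 2 : ℝ) : UnitAddCircle)} := by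
  intro z hz
  obtain ⟨t, ht, rfl⟩ := AddCircle.eq_coe_Ico z
  by_contra hne
  simp only [mem_insert_iff, mem_singleton_iff, not_or] at hne
  have hcoe : IsOpenMap ((↑) : ℝ → UnitAddCircle) := QuotientAddGroup.isOpenMap_coe
  rcases lt_or_gt_of_ne (fun h => hne.2 (by rw [h]) : t ≠ 1 / 2) with h | h
  · have ht0 : 0 < t := lt_of_le_of_ne ht.1 fun h => hne.1 (by rw [h])
    exact hz.2 (mem_interior.2 ⟨_, image_mono Ioo_subset_Ico_self, hcoe _ isOpen_Ioo,
      t, ⟨ht0, h⟩, rfl⟩)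
  · obtain ⟨_, ⟨a, ha, rfl⟩, b, hb, hba⟩ :=
      mem_closure_iff.1 hz.1 _ (hcoe _ isOpen_Ioo) ⟨t, ⟨h, ht.2⟩, rfl⟩
    have hab : b = a := (AddCircle.coe_eq_coe_iff_of_mem_Ico (a := 0)
      (by rw [zero_add]; exact ⟨hb.1, by linarith [hb.2]⟩)
      (by rw [zero_add]; exact ⟨by linarith [ha.1], ha.2⟩)).1 hba
    linarith [ha.1, hb.2]

theorem exists_rat_eq_of_coe_eq_ratCast {t : ℝ} {q : ℚ}
    (h : (t : UnitAddCircle) = ((q : ℝ) : UnitAddCircle)) : ∃ r : ℚ, t = r := by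
  obtain ⟨k, hk⟩ := AddSubgroup.mem_zmultiples_iff.1 (QuotientAddGroup.eq.1 h)
  rw [zsmul_eq_mul, mul_one] at hk
  exact ⟨q - k, by push_cast; linarith⟩

theorem finite_setOf_iterate_unipotentMap_apply_eq_ratCast {m : ℕ} {ε : ℝ}
    (hε : Irrational ε) (x : Fin m → UnitAddCircle) (i : Fin m) :
    {n | ∃ q : ℚ,
      (unipotentMap (ε : UnitAddCircle))^[n] x i = ((q : ℝ) : UnitAddCircle)}.Finite := by
  choose ξ hξ using fun k => QuotientAddGroup.mk_surjective (x k)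
  -- `η` lifts `(ε, x 0, …, x (m - 1))` to `ℝ`; the orbit of `x` is then read off `addPrev`.
  let η : ℕ → ℝ
    | 0 => ε
    | k + 1 => if h : k < m then ξ ⟨k, h⟩ else 0
  have hx : x = fun k : Fin m => ((η (k + 1) : ℝ) : UnitAddCircle) :=
    funext fun k => by simp [η, hξ]
  obtain ⟨P, hPcoeff, hPeval⟩ :=
    Polynomial.exists_coeff_eq_and_eval_eq_sum_choose (fun j => η (i + 1 - j)) (i + 1)
  have horbit : ∀ n : ℕ,
      (unipotentMap (ε : UnitAddCircle))^[n] x i = ((P.eval (n : ℝ) : ℝ) : UnitAddCircle) := by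
    intro n
    have := iterate_unipotentMap_apply (fun k => ((η k : ℝ) : UnitAddCircle)) n i
    rw [hx, this, iterate_addPrev_apply, hPeval]
    simp
  refine Set.not_infinite.1 fun hinf => ?_
  have hrat :
      {q : ℚ | ∃ r : ℚ, P.eval (algebraMap ℚ ℝ q) = algebraMap ℚ ℝ r}.Infinite := by
    refine (hinf.image (Nat.cast_injective (R := ℚ)).injOn).mono ?_
    rintro _ ⟨n, ⟨q, hq⟩, rfl⟩
    obtain ⟨r, hr⟩ := exists_rat_eq_of_coe_eq_ratCast ((horbit n).symm.trans hq)
    exact ⟨r, by simpa using hr⟩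
  obtain ⟨Q, hQ⟩ := Polynomial.exists_map_eq_of_infinite_eval_mem_range hrat
  have hcoeff : P.coeff (i + 1) = Q.coeff (i + 1) := by
    rw [← hQ, Polynomial.coeff_map]
    rfl
  simp only [Nat.sub_self, η] at hPcoeff
  refine hε ⟨Q.coeff (i + 1) * (i + 1 : ℕ).factorial, ?_⟩
  rw [Rat.cast_mul, ← hcoeff, hPcoeff]
  push_cast
  field_simp

theorem finite_setOf_iterate_unipotentMap_mem_frontier {m : ℕ} {ε : ℝ} (hε : Irrational ε)
    (x : Fin m → UnitAddCircle) (i : Fin m) :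
    {n | (unipotentMap (ε : UnitAddCircle))^[n] x ∈
      frontier ((fun z => z i) ⁻¹' halfArc)}.Finite := by
  refine (finite_setOf_iterate_unipotentMap_apply_eq_ratCast hε x i).subset fun n hn => ?_
  rcases frontier_halfArc_subset
    ((continuous_apply i).frontier_preimage_subset _ hn) with h | h
  · exact ⟨0, by simpa using h⟩
  · exact ⟨1 / 2, by simpa using h⟩

/-- For the unipotent torus map with irreducible coding set
`U = {x : x_m ∈ [0,1/2)}`, distinct points have distinct essential evolutions,
and points at distance `> δ` are separated within the first `N(δ)` symbols. -/
theorem stmt17 (m : ℕ) (hm : 1 ≤ m) (ε : ℝ) (hε : Irrational ε)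
    (f : (Fin m → UnitAddCircle) → Fin m → UnitAddCircle)
    (hf : ∀ (x : Fin m → UnitAddCircle) (i : Fin m),
      f x i = if i.val = 0 then x i + (ε : UnitAddCircle)
        else x i + x ⟨i.val - 1, lt_of_le_of_lt (Nat.sub_le _ _) i.isLt⟩)
    (U : Set (Fin m → UnitAddCircle))
    (hU : U = {x | ∃ r : ℝ, 0 ≤ r ∧ r < 1 / 2 ∧
      x ⟨m - 1, Nat.sub_lt hm Nat.one_pos⟩ = (r : UnitAddCircle)})
    (hirr : IrredSet f U) :
    (∀ x y : Fin m → UnitAddCircle, x ≠ y →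
      ∀ w : ℕ → Bool, EssEvol f U w x → ¬ EssEvol f U w y) ∧
    (∀ δ : ℝ, 0 < δ → ∃ N : ℕ, ∀ x y : Fin m → UnitAddCircle,
      δ < dist x y → ∀ w v : ℕ → Bool,
        EssEvol f U w x → EssEvol f U v y → ∃ n < N, w n ≠ v n) := by
  set last : Fin m := ⟨m - 1, Nat.sub_lt hm Nat.one_pos⟩
  have hfeq : f = unipotentMap (ε : UnitAddCircle) := funext fun x => funext (hf x)
  have hUeq : U = (fun z => z last) ⁻¹' halfArc := by
    rw [hU]
    ext z
    simp [halfArc, eq_comm, and_assoc]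
  have hfrontier : ∀ x, {n | f^[n] x ∈ frontier U}.Finite := fun x => by
    rw [hfeq, hUeq]
    exact finite_setOf_iterate_unipotentMap_mem_frontier hε x last
  have hcont : Continuous f := hfeq ▸ continuous_unipotentMap _
  have hinj : Injective f := hfeq ▸ unipotentMap_injective _
  have hdistinct : ∀ x y : Fin m → UnitAddCircle, x ≠ y →
      ∀ w : ℕ → Bool, EssEvol f U w x → ¬ EssEvol f U w y := fun x y hxy w hx hy =>
    hxy (eq_of_essEvol_of_irredSet hcont hinj hirr hx hy (hfrontier x) (hfrontier y))
  refine ⟨hdistinct, fun δ hδ => ?_⟩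
  obtain ⟨N, hN⟩ := exists_separation_length_of_isClosed isClosed_setOf_essEvol
    (isClosed_le continuous_const continuous_dist) fun x y w (hxy : δ ≤ dist x y) =>
      hdistinct x y (fun h => by rw [h, dist_self] at hxy; linarith) w
  exact ⟨N, fun x y hxy w v hw hv => hN x y w v hxy.le hw hv⟩
end
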